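/- arXiv:2504.00801 — 4 statements merged into one kernel-verified Lean document; each statement's English description precedes it below -/
import Mathlib

section
/- Let $a<b$, let $h:[a,b]\to\mathbb{R}$ be three times continuously differentiable, attaining its maximum over $[a,b]$ only at the endpoint $c=a$, with $h'(a)=0$ and $h''(a)\neq 0$. Let $k$ be an odd positive integer and let $g:[a,b]\to\mathbb{R}$ be $(k+1)$-times continuously differentiable with $g(a)=g'(a)=\cdots=g^{(k-1)}(a)=0$ and $g^{(k)}(a)\neq 0$. Then, as $t\to\infty$, $\int_a^b e^{t h(x)} g(x)\,dx = e^{t h(a)}\Big( t^{-1/2-k/2}\, g^{(k)}(a)\, \sqrt{\tfrac{2^{k-1}}{|h''(a)|^{k+1}}}\, \tfrac{1}{k!}\big(\tfrac{k-1}{2}\big)! + O(t^{-1-k/2})\Big)$. -/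
open Real MeasureTheory Set

open Filter Topology

/-!
Shift `a` to the origin and put `l = -h''(a)/2`, `c = g⁽ᵏ⁾(a)/k!`. Taylor's theorem gives
`h(a+u) - h(a) = -l u² + O(u³)` and `g(a+u) = c uᵏ + O(uᵏ⁺¹)`. As `a` is a strict maximum,
`l ≥ 0`, so `l > 0` since `h''(a) ≠ 0`, and then compactness gives `h(a+u) - h(a) ≤ -μu²` on
`[0, b-a]` for some `0 < μ ≤ l`. With this Gaussian bound,
`|e^{t(h(a+u)-h(a))} g(a+u) - c uᵏ e^{-tlu²}| ≤ (C₁uᵏ⁺¹ + tC₂uᵏ⁺³) e^{-tμu²}`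
on all of `[0, b-a]`, and the tail `c uᵏ e^{-tlu²}` for `u > b-a` obeys the same bound. Since
`∫₀^∞ uᵐ e^{-tμu²} du` scales like `t^{-(m+1)/2}`, the envelope integrates to `O(t^{-(k+2)/2})`,
while the main term is the odd Gaussian moment `∫₀^∞ uᵏ e^{-su²} du = ((k-1)/2)! / (2 s^{(k+1)/2})`.
-/

lemma abs_exp_sub_exp_le (x y : ℝ) : |exp x - exp y| ≤ |x - y| * exp (max x y) := by
  wlog hyx : y ≤ x generalizing x y
  · rw [abs_sub_comm, abs_sub_comm x, max_comm]
    exact this y x (le_of_not_ge hyx)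
  rw [max_eq_left hyx, abs_of_nonneg (sub_nonneg.2 hyx),
    abs_of_nonneg (sub_nonneg.2 (exp_le_exp.2 hyx))]
  calc exp x - exp y = (1 - exp (y - x)) * exp x := by rw [sub_mul, ← exp_add]; ring_nf
    _ ≤ (x - y) * exp x :=
        mul_le_mul_of_nonneg_right (by linarith [add_one_le_exp (y - x)]) (exp_pos x).le

lemma integrableOn_Ioi_pow_mul_exp_neg_mul_sq (m : ℕ) {s : ℝ} (hs : 0 < s) :
    IntegrableOn (fun u : ℝ => u ^ m * exp (-(s * u ^ 2))) (Ioi 0) := by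
  simpa [neg_mul] using
    integrableOn_rpow_mul_exp_neg_mul_sq hs (s := m) (by linarith [m.cast_nonneg (α := ℝ)])

lemma integral_Ioi_pow_mul_exp_neg_mul_sq (m : ℕ) {s : ℝ} (hs : 0 < s) :
    ∫ u in Ioi 0, u ^ m * exp (-(s * u ^ 2)) =
      s ^ (-((m : ℝ) + 1) / 2) * Gamma (((m : ℝ) + 1) / 2) / 2 := by
  have := integral_rpow_mul_exp_neg_mul_rpow two_pos (by linarith [m.cast_nonneg (α := ℝ)]) hs
    (q := m)
  simp only [rpow_natCast, rpow_two, neg_mul] at this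
  rw [this]
  ring

lemma integral_Ioi_pow_mul_exp_neg_mul_mul_sq (m : ℕ) {t s : ℝ} (ht : 0 < t) (hs : 0 < s) :
    ∫ u in Ioi 0, u ^ m * exp (-(t * s * u ^ 2)) =
      t ^ (-((m : ℝ) + 1) / 2) * ∫ u in Ioi 0, u ^ m * exp (-(s * u ^ 2)) := by
  rw [integral_Ioi_pow_mul_exp_neg_mul_sq m (mul_pos ht hs),
    integral_Ioi_pow_mul_exp_neg_mul_sq m hs, mul_rpow ht.le hs.le]
  ring

lemma integral_Ioi_pow_mul_exp_neg_mul_sq_of_odd {k : ℕ} (hk : Odd k) {s : ℝ} (hs : 0 < s) :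
    ∫ u in Ioi 0, u ^ k * exp (-(s * u ^ 2)) =
      Nat.factorial ((k - 1) / 2) / (2 * s ^ ((k + 1) / 2)) := by
  obtain ⟨m, rfl⟩ := hk
  have hΓ : (((2 * m + 1 : ℕ) : ℝ) + 1) / 2 = (m : ℝ) + 1 := by push_cast; ring
  rw [integral_Ioi_pow_mul_exp_neg_mul_sq _ hs, neg_div, hΓ, Gamma_nat_eq_factorial,
    rpow_neg hs.le, ← Nat.cast_add_one, rpow_natCast, show (2 * m + 1 - 1) / 2 = m by omega,
    show (2 * m + 1 + 1) / 2 = m + 1 by omega]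
  field_simp

lemma abs_integral_Ioi_le_of_abs_le_gaussian_envelope {D : ℝ → ℝ} (k : ℕ) {t μ C₁ C₂ : ℝ}
    (ht : 0 < t) (hμ : 0 < μ)
    (hD : ∀ u ∈ Ioi (0 : ℝ),
      |D u| ≤ (C₁ * u ^ (k + 1) + t * C₂ * u ^ (k + 3)) * exp (-(t * μ * u ^ 2))) :
    |∫ u in Ioi 0, D u| ≤
      (C₁ * (∫ u in Ioi 0, u ^ (k + 1) * exp (-(μ * u ^ 2))) +
        C₂ * ∫ u in Ioi 0, u ^ (k + 3) * exp (-(μ * u ^ 2))) * t ^ (-((k : ℝ) + 2) / 2) := by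
  have hE : ∀ u : ℝ, (C₁ * u ^ (k + 1) + t * C₂ * u ^ (k + 3)) * exp (-(t * μ * u ^ 2)) =
      C₁ * (u ^ (k + 1) * exp (-(t * μ * u ^ 2))) +
        t * C₂ * (u ^ (k + 3) * exp (-(t * μ * u ^ 2))) := fun u => by ring
  have htμ : 0 < t * μ := mul_pos ht hμ
  have hint₁ := (integrableOn_Ioi_pow_mul_exp_neg_mul_sq (k + 1) htμ).const_mul C₁
  have hint₃ := (integrableOn_Ioi_pow_mul_exp_neg_mul_sq (k + 3) htμ).const_mul (t * C₂)
  have hexp₁ : t ^ (-(((k + 1 : ℕ) : ℝ) + 1) / 2) = t ^ (-((k : ℝ) + 2) / 2) := by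
    congr 1; push_cast; ring
  have hexp₃ : t * t ^ (-(((k + 3 : ℕ) : ℝ) + 1) / 2) = t ^ (-((k : ℝ) + 2) / 2) := by
    rw [show -(((k + 3 : ℕ) : ℝ) + 1) / 2 = -((k : ℝ) + 2) / 2 - 1 by push_cast; ring,
      rpow_sub_one ht.ne']
    field_simp
  calc |∫ u in Ioi 0, D u|
      ≤ ∫ u in Ioi 0, (C₁ * u ^ (k + 1) + t * C₂ * u ^ (k + 3)) * exp (-(t * μ * u ^ 2)) :=
        norm_integral_le_of_norm_le (f := D)
          (IntegrableOn.congr_fun (hint₁.add hint₃) (fun u _ => (hE u).symm) measurableSet_Ioi)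
          ((ae_restrict_iff' measurableSet_Ioi).2 (.of_forall hD))
    _ = _ := by
        simp_rw [hE]
        rw [integral_add hint₁ hint₃, integral_const_mul, integral_const_mul,
          integral_Ioi_pow_mul_exp_neg_mul_mul_sq _ ht hμ,
          integral_Ioi_pow_mul_exp_neg_mul_mul_sq _ ht hμ, hexp₁, ← hexp₃]
        ring

lemma abs_exp_mul_mul_sub_mul_exp_le {t l μ p s c u Cφ Cψ : ℝ} (k : ℕ) (ht : 0 ≤ t) (hu : 0 ≤ u)
    (hμl : μ ≤ l) (hp : |p + l * u ^ 2| ≤ Cφ * u ^ 3) (hpμ : p ≤ -(μ * u ^ 2))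
    (hs : |s - c * u ^ k| ≤ Cψ * u ^ (k + 1)) :
    |exp (t * p) * s - c * u ^ k * exp (-(t * l * u ^ 2))| ≤
      (Cψ * u ^ (k + 1) + t * (|c| * Cφ) * u ^ (k + 3)) * exp (-(t * μ * u ^ 2)) := by
  have htp : t * p ≤ -(t * μ * u ^ 2) := by nlinarith
  have htl : -(t * l * u ^ 2) ≤ -(t * μ * u ^ 2) := by nlinarith [mul_nonneg ht (sq_nonneg u)]
  have hexp : |exp (t * p) - exp (-(t * l * u ^ 2))| ≤ t * Cφ * u ^ 3 * exp (-(t * μ * u ^ 2)) :=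
    calc |exp (t * p) - exp (-(t * l * u ^ 2))|
        ≤ |t * p - -(t * l * u ^ 2)| * exp (max (t * p) (-(t * l * u ^ 2))) :=
          abs_exp_sub_exp_le _ _
      _ ≤ t * Cφ * u ^ 3 * exp (-(t * μ * u ^ 2)) := by
          have h₁ : |t * p - -(t * l * u ^ 2)| ≤ t * Cφ * u ^ 3 := by
            rw [show t * p - -(t * l * u ^ 2) = t * (p + l * u ^ 2) by ring, abs_mul,
              abs_of_nonneg ht, mul_assoc]
            exact mul_le_mul_of_nonneg_left hp ht
          exact mul_le_mul h₁ (exp_le_exp.2 (max_le htp htl)) (exp_pos _).le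
            ((abs_nonneg _).trans h₁)
  calc |exp (t * p) * s - c * u ^ k * exp (-(t * l * u ^ 2))|
      = |exp (t * p) * (s - c * u ^ k) + c * u ^ k * (exp (t * p) - exp (-(t * l * u ^ 2)))| := by
        ring_nf
    _ ≤ exp (t * p) * |s - c * u ^ k| + |c| * u ^ k * |exp (t * p) - exp (-(t * l * u ^ 2))| := by
        refine (abs_add_le _ _).trans_eq ?_
        rw [abs_mul, abs_mul, abs_mul, abs_exp, abs_of_nonneg (pow_nonneg hu k)]
    _ ≤ exp (-(t * μ * u ^ 2)) * (Cψ * u ^ (k + 1)) +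
          |c| * u ^ k * (t * Cφ * u ^ 3 * exp (-(t * μ * u ^ 2))) := by
        gcongr
    _ = (Cψ * u ^ (k + 1) + t * (|c| * Cφ) * u ^ (k + 3)) * exp (-(t * μ * u ^ 2)) := by ring

lemma nonneg_of_abs_add_mul_sq_le {φ : ℝ → ℝ} {β l C : ℝ} (hβ : 0 < β)
    (hneg : ∀ u ∈ Ioc 0 β, φ u < 0) (hφ : ∀ u ∈ Icc 0 β, |φ u + l * u ^ 2| ≤ C * u ^ 3) :
    0 ≤ l := by
  have hbound : ∀ u ∈ Ioc 0 β, -(C * u) ≤ l := fun u hu => by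
    have h₁ := (abs_le.1 (hφ u (Ioc_subset_Icc_self hu))).1
    have hu₂ : 0 < u ^ 2 := pow_pos hu.1 2
    nlinarith [hneg u hu]
  have hlim : Tendsto (fun u => -(C * u)) (𝓝[>] 0) (𝓝 0) :=
    (Continuous.tendsto' (by fun_prop) 0 0 (by simp)).mono_left nhdsWithin_le_nhds
  exact le_of_tendsto hlim (eventually_of_mem (Ioc_mem_nhdsGT hβ) hbound)

lemma exists_le_neg_mul_sq_of_abs_add_mul_sq_le {φ : ℝ → ℝ} {β l C : ℝ} (hβ : 0 < β) (hl : 0 < l)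
    (hφc : ContinuousOn φ (Icc 0 β)) (hneg : ∀ u ∈ Ioc 0 β, φ u < 0)
    (hφ : ∀ u ∈ Icc 0 β, |φ u + l * u ^ 2| ≤ C * u ^ 3) :
    ∃ μ > 0, μ ≤ l ∧ ∀ u ∈ Icc 0 β, φ u ≤ -(μ * u ^ 2) := by
  have hC : 0 ≤ C :=
    nonneg_of_mul_nonneg_left ((abs_nonneg _).trans (hφ β ⟨hβ.le, le_rfl⟩)) (pow_pos hβ 3)
  set δ := min β (l / (2 * (C + 1)))
  have hδ : 0 < δ := lt_min hβ (by positivity)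
  have hCδ : C * δ ≤ l / 2 :=
    calc C * δ ≤ C * (l / (2 * (C + 1))) := by gcongr; exact min_le_right _ _
      _ ≤ l / 2 := by rw [mul_div_assoc', div_le_div_iff₀ (by positivity) two_pos]; nlinarith
  obtain ⟨x₀, hx₀, hx₀max⟩ := isCompact_Icc.exists_isMaxOn (nonempty_Icc.2 (min_le_left _ _))
    (hφc.mono (Icc_subset_Icc hδ.le le_rfl))
  have hη : 0 < -φ x₀ := neg_pos.2 (hneg x₀ ⟨hδ.trans_le hx₀.1, hx₀.2⟩)
  refine ⟨min (l / 2) (-φ x₀ / β ^ 2), lt_min (by positivity) (by positivity),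
    (min_le_left _ _).trans (by linarith), fun u hu => ?_⟩
  rcases le_total u δ with huδ | hδu
  · have h₁ := (abs_le.1 (hφ u hu)).2
    have hCu : C * u ^ 3 ≤ l / 2 * u ^ 2 :=
      calc C * u ^ 3 = C * u * u ^ 2 := by ring
        _ ≤ l / 2 * u ^ 2 := by gcongr; exact (mul_le_mul_of_nonneg_left huδ hC).trans hCδ
    nlinarith [min_le_left (l / 2) (-φ x₀ / β ^ 2), sq_nonneg u]
  · have h₁ : φ u ≤ φ x₀ := hx₀max ⟨hδu, hu.2⟩
    have h₂ : -φ x₀ / β ^ 2 * u ^ 2 ≤ -φ x₀ := by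
      rw [div_mul_eq_mul_div, div_le_iff₀ (by positivity)]
      exact mul_le_mul_of_nonneg_left (pow_le_pow_left₀ hu.1 hu.2 2) hη.le
    nlinarith [min_le_right (l / 2) (-φ x₀ / β ^ 2), sq_nonneg u]

theorem abs_integral_exp_mul_sub_gaussian_le {φ ψ : ℝ → ℝ} {β l c Cφ Cψ : ℝ} (k : ℕ)
    (hβ : 0 < β) (hl : 0 < l) (hφc : ContinuousOn φ (Icc 0 β)) (hψc : ContinuousOn ψ (Icc 0 β))
    (hneg : ∀ u ∈ Ioc 0 β, φ u < 0) (hφ : ∀ u ∈ Icc 0 β, |φ u + l * u ^ 2| ≤ Cφ * u ^ 3)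
    (hψ : ∀ u ∈ Icc 0 β, |ψ u - c * u ^ k| ≤ Cψ * u ^ (k + 1)) :
    ∃ C, ∀ t > 0, |(∫ u in 0..β, exp (t * φ u) * ψ u) -
      c * ∫ u in Ioi 0, u ^ k * exp (-(t * l * u ^ 2))| ≤ C * t ^ (-((k : ℝ) + 2) / 2) := by
  obtain ⟨μ, hμ, hμl, hφμ⟩ := exists_le_neg_mul_sq_of_abs_add_mul_sq_le hβ hl hφc hneg hφ
  have hβmem : β ∈ Icc 0 β := ⟨hβ.le, le_rfl⟩
  have hCφ : 0 ≤ Cφ :=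
    nonneg_of_mul_nonneg_left ((abs_nonneg _).trans (hφ β hβmem)) (pow_pos hβ 3)
  have hCψ : 0 ≤ Cψ :=
    nonneg_of_mul_nonneg_left ((abs_nonneg _).trans (hψ β hβmem)) (pow_pos hβ (k + 1))
  refine ⟨(Cψ + |c| / β) * (∫ u in Ioi 0, u ^ (k + 1) * exp (-(μ * u ^ 2))) +
    |c| * Cφ * ∫ u in Ioi 0, u ^ (k + 3) * exp (-(μ * u ^ 2)), fun t ht => ?_⟩
  set F := fun u => exp (t * φ u) * ψ u
  have hF : IntegrableOn F (Ioc 0 β) :=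
    ((continuous_exp.comp_continuousOn (hφc.const_smul t)).mul hψc).integrableOn_Icc.mono_set
      Ioc_subset_Icc_self
  have hq := integrableOn_Ioi_pow_mul_exp_neg_mul_sq k (mul_pos ht hl)
  have hsplit : (∫ u in 0..β, F u) - c * ∫ u in Ioi 0, u ^ k * exp (-(t * l * u ^ 2)) =
      ∫ u in Ioi 0, ((Iic β).indicator F u - c * (u ^ k * exp (-(t * l * u ^ 2)))) := by
    rw [integral_sub _ (hq.const_mul c), integral_const_mul,
      setIntegral_indicator measurableSet_Iic, Ioi_inter_Iic, intervalIntegral.integral_of_le hβ.le]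
    exact (integrableOn_indicator_iff measurableSet_Iic).2 (by rwa [Iic_inter_Ioi])
  rw [hsplit]
  refine abs_integral_Ioi_le_of_abs_le_gaussian_envelope k ht hμ
    (C₁ := Cψ + |c| / β) (C₂ := |c| * Cφ) fun u (hu : 0 < u) => ?_
  rcases le_or_gt u β with huβ | hβu
  · have huI : u ∈ Icc 0 β := ⟨hu.le, huβ⟩
    rw [indicator_of_mem (show u ∈ Iic β from huβ), ← mul_assoc]
    refine (abs_exp_mul_mul_sub_mul_exp_le k ht.le hu.le hμl (hφ u huI) (hφμ u huI)
      (hψ u huI)).trans ?_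
    gcongr
    exact le_add_of_nonneg_right (by positivity)
  · rw [indicator_of_notMem (show u ∉ Iic β from not_le.2 hβu), zero_sub, abs_neg, ← mul_assoc,
      abs_mul, abs_mul, abs_exp, abs_of_pos (pow_pos hu k)]
    have hpow : |c| * u ^ k ≤ |c| / β * u ^ (k + 1) := by
      rw [div_mul_eq_mul_div, le_div_iff₀ hβ, pow_succ, mul_assoc]
      gcongr
    calc |c| * u ^ k * exp (-(t * l * u ^ 2))
        ≤ |c| / β * u ^ (k + 1) * exp (-(t * μ * u ^ 2)) := by gcongr
      _ ≤ _ := by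
        gcongr
        have : 0 ≤ t * (|c| * Cφ) * u ^ (k + 3) := by positivity
        nlinarith [mul_nonneg hCψ (pow_pos hu (k + 1)).le]

lemma taylorWithinEval_two (f : ℝ → ℝ) (s : Set ℝ) (x₀ x : ℝ) :
    taylorWithinEval f 2 s x₀ x = f x₀ + derivWithin f s x₀ * (x - x₀) +
      iteratedDerivWithin 2 f s x₀ / 2 * (x - x₀) ^ 2 := by
  simp [taylor_within_apply]
  ring

lemma taylorWithinEval_eq_of_iteratedDerivWithin_eq_zero {f : ℝ → ℝ} {n : ℕ} {s : Set ℝ} {x₀ : ℝ}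
    (hf : ∀ i < n, iteratedDerivWithin i f s x₀ = 0) (x : ℝ) :
    taylorWithinEval f n s x₀ x = iteratedDerivWithin n f s x₀ / n.factorial * (x - x₀) ^ n := by
  rw [taylor_within_apply, Finset.sum_range_succ,
    Finset.sum_eq_zero fun i hi => by rw [hf i (Finset.mem_range.1 hi), smul_zero], zero_add,
    smul_eq_mul]
  ring

lemma exists_abs_sub_taylorWithinEval_add_le {f : ℝ → ℝ} {a b : ℝ} {n : ℕ} (hab : a ≤ b)
    (hf : ContDiffOn ℝ (n + 1) f (Icc a b)) :
    ∃ C, ∀ u ∈ Icc 0 (b - a),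
      |f (a + u) - taylorWithinEval f n (Icc a b) a (a + u)| ≤ C * u ^ (n + 1) := by
  obtain ⟨C, hC⟩ := exists_taylor_mean_remainder_bound hab hf
  exact ⟨C, fun u hu => by simpa using hC (a + u) ⟨by linarith [hu.1], by linarith [hu.2]⟩⟩

lemma rpow_mul_sqrt_mul_factorial_eq_integral_of_odd {k : ℕ} (hk : Odd k) {t A : ℝ} (ht : 0 < t)
    (hA : A < 0) :
    t ^ (-(1 : ℝ) / 2 - (k : ℝ) / 2) * √(2 ^ (k - 1) / |A| ^ (k + 1)) *
        Nat.factorial ((k - 1) / 2) =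
      ∫ u in Ioi 0, u ^ k * exp (-(t * (-A / 2) * u ^ 2)) := by
  rw [integral_Ioi_pow_mul_exp_neg_mul_sq_of_odd hk (by nlinarith)]
  obtain ⟨m, rfl⟩ := hk
  have hsqrt : √(2 ^ (2 * m + 1 - 1) / |A| ^ (2 * m + 1 + 1)) = 2 ^ m / (-A) ^ (m + 1) := by
    have hA' : 0 < -A := neg_pos.2 hA
    rw [abs_of_neg hA, ← sqrt_sq (by positivity : (0 : ℝ) ≤ 2 ^ m / (-A) ^ (m + 1)),
      show 2 * m + 1 - 1 = 2 * m by omega]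
    congr 1
    ring
  rw [hsqrt, show -(1 : ℝ) / 2 - ((2 * m + 1 : ℕ) : ℝ) / 2 = -((m + 1 : ℕ) : ℝ) by push_cast; ring,
    rpow_neg ht.le, rpow_natCast, show (2 * m + 1 + 1) / 2 = m + 1 by omega, mul_pow, div_pow]
  field_simp
  ring

theorem abs_integral_exp_mul_sub_exp_mul_gaussian_le {h g : ℝ → ℝ} {a b l c Ch Cg : ℝ} (k : ℕ)
    (hab : a < b) (hl : 0 < l) (hhc : ContinuousOn h (Icc a b)) (hgc : ContinuousOn g (Icc a b))
    (hneg : ∀ u ∈ Ioc 0 (b - a), h (a + u) - h a < 0)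
    (hh : ∀ u ∈ Icc 0 (b - a), |h (a + u) - h a + l * u ^ 2| ≤ Ch * u ^ 3)
    (hg : ∀ u ∈ Icc 0 (b - a), |g (a + u) - c * u ^ k| ≤ Cg * u ^ (k + 1)) :
    ∃ C, ∀ t > 0, |(∫ x in a..b, exp (t * h x) * g x) -
      exp (t * h a) * (c * ∫ u in Ioi 0, u ^ k * exp (-(t * l * u ^ 2)))| ≤
        C * exp (t * h a) * t ^ (-((k : ℝ) + 2) / 2) := by
  have hcont : ContinuousOn (fun u => a + u) (Icc 0 (b - a)) := by fun_prop
  have hmaps : MapsTo (fun u => a + u) (Icc 0 (b - a)) (Icc a b) :=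
    fun u hu => ⟨by linarith [hu.1], by linarith [hu.2]⟩
  obtain ⟨C, hC⟩ := abs_integral_exp_mul_sub_gaussian_le k (sub_pos.2 hab) hl
    ((hhc.comp hcont hmaps).sub continuousOn_const) (hgc.comp hcont hmaps) hneg hh hg
  refine ⟨C, fun t ht => ?_⟩
  have hshift : ∫ x in a..b, exp (t * h x) * g x =
      exp (t * h a) * ∫ u in 0..(b - a), exp (t * (h (a + u) - h a)) * g (a + u) := by
    rw [← intervalIntegral.integral_const_mul, intervalIntegral.integral_comp_add_left
      (fun x => exp (t * h a) * (exp (t * (h x - h a)) * g x)) a, add_zero, add_sub_cancel]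
    congr 1 with x
    rw [← mul_assoc, ← exp_add]
    ring_nf
  rw [hshift, ← mul_sub, abs_mul, abs_of_pos (exp_pos _), mul_comm C, mul_assoc]
  exact mul_le_mul_of_nonneg_left (hC t ht) (exp_pos _).le

theorem laplace_left_endpoint_critical_odd_general
    (a b : ℝ) (hab : a < b)
    (h g : ℝ → ℝ) (k : ℕ) (hk : Odd k)
    (hh : ContDiffOn ℝ 3 h (Set.Icc a b))
    (hmax : ∀ x ∈ Set.Icc a b, x ≠ a → h x < h a)
    (hh1 : derivWithin h (Set.Icc a b) a = 0)
    (hh2 : iteratedDerivWithin 2 h (Set.Icc a b) a ≠ 0)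
    (hg : ContDiffOn ℝ (k + 1) g (Set.Icc a b))
    (hgvanish : ∀ i < k, iteratedDerivWithin i g (Set.Icc a b) a = 0) :
    ∃ C > 0, ∃ T > 0, ∀ t > T,
      |(∫ x in a..b, Real.exp (t * h x) * g x) -
        Real.exp (t * h a) * t ^ (-(1 : ℝ) / 2 - (k : ℝ) / 2) *
          iteratedDerivWithin k g (Set.Icc a b) a *
          Real.sqrt ((2 : ℝ) ^ (k - 1) / |iteratedDerivWithin 2 h (Set.Icc a b) a| ^ (k + 1)) *
          ((Nat.factorial ((k - 1) / 2) : ℝ) / (Nat.factorial k : ℝ))| ≤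
        C * Real.exp (t * h a) * t ^ (-(1 : ℝ) - (k : ℝ) / 2) := by
  set A := iteratedDerivWithin 2 h (Icc a b) a
  set G := iteratedDerivWithin k g (Icc a b) a
  obtain ⟨Ch, hCh⟩ := exists_abs_sub_taylorWithinEval_add_le (n := 2) hab.le hh
  obtain ⟨Cg, hCg⟩ := exists_abs_sub_taylorWithinEval_add_le hab.le hg
  have hφ : ∀ u ∈ Icc 0 (b - a), |h (a + u) - h a + -A / 2 * u ^ 2| ≤ Ch * u ^ 3 := fun u hu => by
    convert hCh u hu using 2
    rw [taylorWithinEval_two, hh1]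
    ring
  have hψ : ∀ u ∈ Icc 0 (b - a), |g (a + u) - G / k.factorial * u ^ k| ≤ Cg * u ^ (k + 1) :=
    fun u hu => by
      simpa [taylorWithinEval_eq_of_iteratedDerivWithin_eq_zero hgvanish] using hCg u hu
  have hneg : ∀ u ∈ Ioc 0 (b - a), h (a + u) - h a < 0 := fun u hu =>
    sub_neg.2 (hmax _ ⟨by linarith [hu.1], by linarith [hu.2]⟩ (by linarith [hu.1]))
  have hA : A < 0 := by
    have := nonneg_of_abs_add_mul_sq_le (sub_pos.2 hab) hneg hφ
    exact lt_of_le_of_ne (by linarith) hh2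
  obtain ⟨C, hC⟩ := abs_integral_exp_mul_sub_exp_mul_gaussian_le k hab (by linarith)
    hh.continuousOn hg.continuousOn hneg hφ hψ
  refine ⟨max C 1, by positivity, 1, one_pos, fun t ht => ?_⟩
  have ht₀ : 0 < t := one_pos.trans ht
  have hmain : exp (t * h a) * t ^ (-(1 : ℝ) / 2 - (k : ℝ) / 2) * G *
      √(2 ^ (k - 1) / |A| ^ (k + 1)) * (Nat.factorial ((k - 1) / 2) / k.factorial) =
      exp (t * h a) * (G / k.factorial * ∫ u in Ioi 0, u ^ k * exp (-(t * (-A / 2) * u ^ 2))) := by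
    rw [← rpow_mul_sqrt_mul_factorial_eq_integral_of_odd hk ht₀ hA]
    ring
  rw [hmain, show -(1 : ℝ) - k / 2 = -((k : ℝ) + 2) / 2 by ring]
  exact (hC t ht₀).trans (by gcongr; exact le_max_left C 1)

/-- Laplace's method, maximum at the left endpoint `a` with `h'(a) = 0`, `k` odd:
`∫ e^{th} g = e^{th(a)} (t^{-1/2-k/2} g^(k)(a) √(2^(k-1)/|h''(a)|^(k+1)) ((k-1)/2)!/k! + O(t^{-1-k/2}))`. -/
theorem laplace_left_endpoint_critical_odd
    (a b : ℝ) (hab : a < b)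
    (h g : ℝ → ℝ) (k : ℕ) (hk : Odd k) (hkpos : 0 < k)
    (hh : ContDiffOn ℝ 3 h (Set.Icc a b))
    (hmax : ∀ x ∈ Set.Icc a b, x ≠ a → h x < h a)
    (hh1 : derivWithin h (Set.Icc a b) a = 0)
    (hh2 : iteratedDerivWithin 2 h (Set.Icc a b) a ≠ 0)
    (hg : ContDiffOn ℝ (k + 1) g (Set.Icc a b))
    (hgvanish : ∀ i < k, iteratedDerivWithin i g (Set.Icc a b) a = 0)
    (hgk : iteratedDerivWithin k g (Set.Icc a b) a ≠ 0) :
    ∃ C > 0, ∃ T > 0, ∀ t > T,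
      |(∫ x in a..b, Real.exp (t * h x) * g x) -
        Real.exp (t * h a) * t ^ (-(1 : ℝ) / 2 - (k : ℝ) / 2) *
          iteratedDerivWithin k g (Set.Icc a b) a *
          Real.sqrt ((2 : ℝ) ^ (k - 1) / |iteratedDerivWithin 2 h (Set.Icc a b) a| ^ (k + 1)) *
          ((Nat.factorial ((k - 1) / 2) : ℝ) / (Nat.factorial k : ℝ))| ≤
        C * Real.exp (t * h a) * t ^ (-(1 : ℝ) - (k : ℝ) / 2) :=
  laplace_left_endpoint_critical_odd_general a b hab h g k hk hh hmax hh1 hh2 hg hgvanish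
end

section
/- Let $a<b$, let $h:[a,b]\to\mathbb{R}$ be three times continuously differentiable, attaining its maximum over $[a,b]$ only at the endpoint $c=b$, with $h'(b)\neq 0$ and $h''(b)\neq 0$. Let $k$ be a nonnegative integer and let $g:[a,b]\to\mathbb{R}$ be $(k+1)$-times continuously differentiable with $g(b)=g'(b)=\cdots=g^{(k-1)}(b)=0$ and $g^{(k)}(b)\neq 0$. Then, as $t\to\infty$, $\int_a^b e^{t h(x)} g(x)\,dx = e^{t h(b)}\Big( t^{-1-k}\, g^{(k)}(b)\, (h'(b))^{-1-k}\, (-1)^{k} + O(t^{-2-k})\Big)$. -/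
/-!
Put `s = b - x`, `H s = h (b - s) - h b` and `G s = g (b - s)`, so that the integral is
`e^{t h(b)} ∫₀^{b-a} e^{t H(s)} G(s) ds`. Since `b` is a strict maximum, `α = h'(b) > 0` and
`H s ≤ -γ s` for some `γ > 0`; by Taylor, `H s = -α s + O(s²)` and
`G s = (-1)^k g^(k)(b) s^k / k! + O(s^(k+1))`. Replacing `G` by its leading monomial and `e^{tH}` by
`e^{-tαs}` costs integrals of `s^(k+1) e^{-tγs}` and `t s^(k+2) e^{-tγs}`, both `O(t^(-k-2))`
because `∫₀^∞ s^m e^{-βs} ds = m!/β^(m+1)`. The model integral over `(0, ∞)` is the leading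
term, and its tail over `(b - a, ∞)` is again `O(t^(-k-2))`.
-/

open Real MeasureTheory Set
open scoped Nat

lemma integrableOn_Ioi_pow_mul_exp_neg_mul {β : ℝ} (hβ : 0 < β) (m : ℕ) :
    IntegrableOn (fun s : ℝ => s ^ m * exp (-(β * s))) (Ioi 0) := by
  refine (integrableOn_rpow_mul_exp_neg_mul_rpow (p := 1) (s := m)
    (neg_one_lt_zero.trans_le m.cast_nonneg) zero_lt_one hβ).congr_fun (fun s _ => ?_)
    measurableSet_Ioi
  simp

lemma integral_Ioi_pow_mul_exp_neg_mul {β : ℝ} (hβ : 0 < β) (m : ℕ) :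
    ∫ s in Ioi (0 : ℝ), s ^ m * exp (-(β * s)) = m ! / β ^ (m + 1) := by
  have h := integral_rpow_mul_exp_neg_mul_Ioi (a := m + 1) (by positivity) hβ
  rw [add_sub_cancel_right, Gamma_nat_eq_factorial, ← Nat.cast_succ] at h
  simp only [rpow_natCast] at h
  rw [h, one_div_pow, one_div_mul_eq_div]

lemma intervalIntegral_pow_mul_exp_neg_mul_le {β R : ℝ} (hβ : 0 < β) (hR : 0 ≤ R) (m : ℕ) :
    ∫ s in (0 : ℝ)..R, s ^ m * exp (-(β * s)) ≤ m ! / β ^ (m + 1) := by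
  rw [intervalIntegral.integral_of_le hR, ← integral_Ioi_pow_mul_exp_neg_mul hβ m]
  refine setIntegral_mono_set (integrableOn_Ioi_pow_mul_exp_neg_mul hβ m) ?_
    Ioc_subset_Ioi_self.eventuallyLE
  filter_upwards [ae_restrict_mem measurableSet_Ioi] with s hs
  exact mul_nonneg (pow_nonneg hs.le m) (exp_pos _).le

/-- On `(R, ∞)` the weight `s ^ m` is at most `s ^ (m + 1) / R`, which trades the tail for one
more power of `1 / β`. -/
lemma integral_Ioi_pow_mul_exp_neg_mul_le {β R : ℝ} (hβ : 0 < β) (hR : 0 < R) (m : ℕ) :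
    ∫ s in Ioi R, s ^ m * exp (-(β * s)) ≤ (m + 1)! / (R * β ^ (m + 2)) := by
  have hint := integrableOn_Ioi_pow_mul_exp_neg_mul hβ (m + 1)
  calc ∫ s in Ioi R, s ^ m * exp (-(β * s))
      ≤ ∫ s in Ioi R, R⁻¹ * (s ^ (m + 1) * exp (-(β * s))) := by
        refine setIntegral_mono_on ((integrableOn_Ioi_pow_mul_exp_neg_mul hβ m).mono_set
          (Ioi_subset_Ioi hR.le)) ((hint.mono_set (Ioi_subset_Ioi hR.le)).const_mul _)
          measurableSet_Ioi fun s hs => ?_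
        have hRs : 1 ≤ R⁻¹ * s := by rw [inv_mul_eq_div, one_le_div hR]; exact hs.le
        have hs0 : 0 ≤ s := hR.le.trans hs.le
        calc s ^ m * exp (-(β * s)) = 1 * (s ^ m * exp (-(β * s))) := (one_mul _).symm
          _ ≤ (R⁻¹ * s) * (s ^ m * exp (-(β * s))) := by gcongr
          _ = R⁻¹ * (s ^ (m + 1) * exp (-(β * s))) := by ring
    _ ≤ R⁻¹ * ∫ s in Ioi 0, s ^ (m + 1) * exp (-(β * s)) := by
        rw [integral_const_mul]
        refine mul_le_mul_of_nonneg_left (setIntegral_mono_set hint ?_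
          (Ioi_subset_Ioi hR.le).eventuallyLE) (inv_nonneg.2 hR.le)
        filter_upwards [ae_restrict_mem measurableSet_Ioi] with s hs
        exact mul_nonneg (pow_nonneg hs.le _) (exp_pos _).le
    _ = (m + 1)! / (R * β ^ (m + 2)) := by
        rw [integral_Ioi_pow_mul_exp_neg_mul hβ]
        field_simp

lemma abs_intervalIntegral_le_of_abs_le_pow_mul_exp {f : ℝ → ℝ} {β R C : ℝ} {m : ℕ}
    (hβ : 0 < β) (hR : 0 < R) (hf : ∀ s ∈ Ioc 0 R, |f s| ≤ C * (s ^ m * exp (-(β * s)))) :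
    |∫ s in (0 : ℝ)..R, f s| ≤ C * (m ! / β ^ (m + 1)) := by
  have hC : 0 ≤ C := nonneg_of_mul_nonneg_left ((abs_nonneg _).trans (hf R ⟨hR, le_rfl⟩))
    (by positivity)
  calc |∫ s in (0 : ℝ)..R, f s|
      ≤ ∫ s in (0 : ℝ)..R, C * (s ^ m * exp (-(β * s))) :=
        intervalIntegral.norm_integral_le_of_norm_le (f := f) hR.le (.of_forall hf)
          ((by fun_prop : Continuous fun s : ℝ => C * (s ^ m * exp (-(β * s))))
            |>.intervalIntegrable _ _)
    _ ≤ C * (m ! / β ^ (m + 1)) := by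
        rw [intervalIntegral.integral_const_mul]
        exact mul_le_mul_of_nonneg_left (intervalIntegral_pow_mul_exp_neg_mul_le hβ hR.le m) hC

lemma abs_exp_sub_exp_le_of_le {u v w : ℝ} (hu : u ≤ w) (hv : v ≤ w) :
    |exp u - exp v| ≤ |u - v| * exp w := by
  wlog hvu : v ≤ u generalizing u v
  · rw [abs_sub_comm, abs_sub_comm u]
    exact this hv hu (le_of_not_ge hvu)
  have hexp : exp v = exp (v - u) * exp u := by rw [← exp_add, sub_add_cancel]
  have := add_one_le_exp (v - u)
  rw [abs_of_nonneg (sub_nonneg.2 (exp_le_exp.2 hvu)), abs_of_nonneg (sub_nonneg.2 hvu)]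
  calc exp u - exp v = (1 - exp (v - u)) * exp u := by rw [hexp]; ring
    _ ≤ (u - v) * exp u := mul_le_mul_of_nonneg_right (by linarith) (exp_pos u).le
    _ ≤ (u - v) * exp w := by gcongr

lemma derivWithin_nonneg_of_isMaxOn_right {f : ℝ → ℝ} {a b : ℝ} (hab : a < b)
    (hf : DifferentiableWithinAt ℝ f (Icc a b) b) (hmax : IsMaxOn f (Icc a b) b) :
    0 ≤ derivWithin f (Icc a b) b := by
  have hcone : a - b ∈ posTangentConeAt (Icc a b) b :=
    sub_mem_posTangentConeAt_of_segment_subset (by rw [segment_symm, segment_eq_Icc hab.le])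
  have := hmax.localize.hasFDerivWithinAt_nonpos hf.hasDerivWithinAt.hasFDerivWithinAt hcone
  rw [ContinuousLinearMap.toSpanSingleton_apply, smul_eq_mul] at this
  nlinarith

lemma exists_abs_sub_le_of_iteratedDerivWithin_eq_zero {f : ℝ → ℝ} {a b : ℝ} {n : ℕ}
    (hab : a ≤ b) (hf : ContDiffOn ℝ (n + 1) f (Icc a b))
    (hvan : ∀ i < n, iteratedDerivWithin i f (Icc a b) a = 0) :
    ∃ C, ∀ x ∈ Icc a b,
      |f x - iteratedDerivWithin n f (Icc a b) a / n ! * (x - a) ^ n| ≤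
        C * (x - a) ^ (n + 1) := by
  obtain ⟨C, hC⟩ := exists_taylor_mean_remainder_bound hab hf
  refine ⟨C, fun x hx => ?_⟩
  have htaylor : taylorWithinEval f n (Icc a b) a x =
      iteratedDerivWithin n f (Icc a b) a / n ! * (x - a) ^ n := by
    rw [taylor_within_apply, Finset.sum_range_succ, Finset.sum_eq_zero fun i hi => by
      rw [hvan i (Finset.mem_range.1 hi), smul_zero], zero_add, smul_eq_mul]
    ring
  simpa only [htaylor, Real.norm_eq_abs] using hC x hx

lemma iteratedDerivWithin_comp_const_sub_Icc (f : ℝ → ℝ) (n : ℕ) (a b s : ℝ) :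
    iteratedDerivWithin n (fun s => f (b - s)) (Icc 0 (b - a)) s =
      (-1) ^ n * iteratedDerivWithin n f (Icc a b) (b - s) := by
  rw [iteratedDerivWithin_comp_const_sub, neg_Icc, vadd_Icc]
  simp

lemma exists_abs_comp_const_sub_sub_le {f : ℝ → ℝ} {a b : ℝ} {n : ℕ} (hab : a ≤ b)
    (hf : ContDiffOn ℝ (n + 1) f (Icc a b))
    (hvan : ∀ i < n, iteratedDerivWithin i f (Icc a b) b = 0) :
    ∃ C, ∀ s ∈ Icc 0 (b - a),
      |f (b - s) - (-1) ^ n * iteratedDerivWithin n f (Icc a b) b / n ! * s ^ n| ≤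
        C * s ^ (n + 1) := by
  have hmaps : MapsTo (fun s => b - s) (Icc 0 (b - a)) (Icc a b) := fun s hs =>
    ⟨by linarith [hs.2], by linarith [hs.1]⟩
  have hderiv := iteratedDerivWithin_comp_const_sub_Icc f
  obtain ⟨C, hC⟩ := exists_abs_sub_le_of_iteratedDerivWithin_eq_zero
    (f := fun s => f (b - s)) (sub_nonneg.2 hab)
    (hf.comp (by fun_prop) hmaps) fun i hi => by rw [hderiv, sub_zero, hvan i hi, mul_zero]
  refine ⟨C, fun s hs => ?_⟩
  simpa only [hderiv, sub_zero, mul_div_assoc] using hC s hs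

lemma exists_abs_comp_const_sub_sub_add_le {f : ℝ → ℝ} {a b : ℝ} (hab : a ≤ b)
    (hf : ContDiffOn ℝ 2 f (Icc a b)) :
    ∃ C, ∀ s ∈ Icc 0 (b - a),
      |f (b - s) - f b + derivWithin f (Icc a b) b * s| ≤ C * s ^ 2 := by
  obtain ⟨C, hC⟩ := exists_abs_comp_const_sub_sub_le (n := 1) (f := fun x => f x - f b) hab
    (hf.sub contDiffOn_const) fun i hi => by
      rw [Nat.lt_one_iff.1 hi, iteratedDerivWithin_zero, sub_self]
  refine ⟨C, fun s hs => ?_⟩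
  have := hC s hs
  rwa [iteratedDerivWithin_one, derivWithin_sub_const, pow_one, Nat.factorial_one,
    Nat.cast_one, div_one, pow_one, neg_one_mul, neg_mul, sub_neg_eq_add] at this

lemma exists_le_neg_mul_of_abs_add_mul_le {H : ℝ → ℝ} {R α K : ℝ}
    (hH : ContinuousOn H (Icc 0 R)) (hneg : ∀ s ∈ Ioc 0 R, H s < 0) (hα : 0 < α)
    (hHα : ∀ s ∈ Icc 0 R, |H s + α * s| ≤ K * s ^ 2) :
    ∃ γ, 0 < γ ∧ γ ≤ α ∧ ∀ s ∈ Icc 0 R, H s ≤ -(γ * s) := by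
  set δ := α / (2 * max K 1)
  have hδ : 0 < δ := by positivity
  have hnear : ∀ s ∈ Icc 0 R, s ≤ δ → H s ≤ -(α / 2 * s) := by
    intro s hs hsδ
    have hKs : max K 1 * s ≤ α / 2 := by
      rw [le_div_iff₀' (by positivity : (0 : ℝ) < 2 * max K 1)] at hsδ
      linarith
    have : K * s ^ 2 ≤ α / 2 * s := by
      nlinarith [le_max_left K 1, hs.1, mul_le_mul_of_nonneg_right hKs hs.1]
    linarith [(abs_le.1 (hHα s hs)).2]
  rcases le_or_gt R δ with hRδ | hδR
  · exact ⟨α / 2, by positivity, by linarith, fun s hs => hnear s hs (hs.2.trans hRδ)⟩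
  obtain ⟨s₀, hs₀, hmax⟩ := isCompact_Icc.exists_isMaxOn (nonempty_Icc.2 hδR.le)
    (hH.mono (Icc_subset_Icc_left hδ.le))
  have hR : 0 < R := hδ.trans hδR
  have hη : 0 < -H s₀ / R :=
    div_pos (neg_pos.2 (hneg s₀ ⟨hδ.trans_le hs₀.1, hs₀.2⟩)) hR
  refine ⟨min (α / 2) (-H s₀ / R), lt_min (by positivity) hη,
    (min_le_left _ _).trans (by linarith), fun s hs => ?_⟩
  rcases le_or_gt s δ with hsδ | hδs
  · calc H s ≤ -(α / 2 * s) := hnear s hs hsδ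
      _ ≤ -(min (α / 2) (-H s₀ / R) * s) := by gcongr; exacts [hs.1, min_le_left _ _]
  · calc H s ≤ H s₀ := hmax ⟨hδs.le, hs.2⟩
      _ = -(-H s₀ / R * R) := by field_simp
      _ ≤ -(-H s₀ / R * s) := by gcongr; exact hs.2
      _ ≤ -(min (α / 2) (-H s₀ / R) * s) := by gcongr; exacts [hs.1, min_le_right _ _]

section Watson

variable {H G : ℝ → ℝ} {R α γ K₁ K₂ c t : ℝ} {k : ℕ}

lemma abs_intervalIntegral_exp_mul_sub_pow_le (hR : 0 < R) (ht : 0 < t) (hγ : 0 < γ)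
    (hHγ : ∀ s ∈ Icc 0 R, H s ≤ -(γ * s))
    (hGc : ∀ s ∈ Icc 0 R, |G s - c * s ^ k| ≤ K₁ * s ^ (k + 1)) :
    |∫ s in (0 : ℝ)..R, exp (t * H s) * (G s - c * s ^ k)| ≤
      K₁ * ((k + 1)! / (t * γ) ^ (k + 2)) := by
  refine abs_intervalIntegral_le_of_abs_le_pow_mul_exp (by positivity) hR fun s hs => ?_
  have hs' : s ∈ Icc 0 R := Ioc_subset_Icc_self hs
  have he : exp (t * H s) ≤ exp (-(t * γ * s)) := by
    gcongr
    nlinarith [hHγ s hs']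
  rw [abs_mul, abs_of_pos (exp_pos _)]
  calc exp (t * H s) * |G s - c * s ^ k| ≤ exp (-(t * γ * s)) * (K₁ * s ^ (k + 1)) :=
        mul_le_mul he (hGc s hs') (abs_nonneg _) (exp_pos _).le
    _ = K₁ * (s ^ (k + 1) * exp (-(t * γ * s))) := by ring

lemma abs_intervalIntegral_mul_exp_sub_exp_le (hR : 0 < R) (ht : 0 < t) (hγ : 0 < γ)
    (hγα : γ ≤ α) (hHγ : ∀ s ∈ Icc 0 R, H s ≤ -(γ * s))
    (hHα : ∀ s ∈ Icc 0 R, |H s + α * s| ≤ K₂ * s ^ 2) :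
    |∫ s in (0 : ℝ)..R, c * ((exp (t * H s) - exp (-(t * α * s))) * s ^ k)| ≤
      |c| * t * K₂ * ((k + 2)! / (t * γ) ^ (k + 3)) := by
  refine abs_intervalIntegral_le_of_abs_le_pow_mul_exp (by positivity) hR fun s hs => ?_
  have hs' : s ∈ Icc 0 R := Ioc_subset_Icc_self hs
  have hs0 : 0 ≤ s := hs'.1
  have hdiff :
      |exp (t * H s) - exp (-(t * α * s))| ≤ t * (K₂ * s ^ 2) * exp (-(t * γ * s)) := by
    refine (abs_exp_sub_exp_le_of_le (w := -(t * γ * s)) (by nlinarith [hHγ s hs'])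
      (neg_le_neg (by gcongr))).trans ?_
    gcongr
    rw [show t * H s - -(t * α * s) = t * (H s + α * s) by ring, abs_mul, abs_of_pos ht]
    exact mul_le_mul_of_nonneg_left (hHα s hs') ht.le
  rw [abs_mul, abs_mul, abs_of_nonneg (pow_nonneg hs0 k)]
  calc |c| * (|exp (t * H s) - exp (-(t * α * s))| * s ^ k)
      ≤ |c| * (t * (K₂ * s ^ 2) * exp (-(t * γ * s)) * s ^ k) := by gcongr
    _ = |c| * t * K₂ * (s ^ (k + 2) * exp (-(t * γ * s))) := by ring

theorem exists_abs_intervalIntegral_exp_mul_sub_le_div_pow (hR : 0 < R) (hγ : 0 < γ)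
    (hγα : γ ≤ α) (hH : ContinuousOn H (Icc 0 R)) (hG : ContinuousOn G (Icc 0 R))
    (hHγ : ∀ s ∈ Icc 0 R, H s ≤ -(γ * s))
    (hHα : ∀ s ∈ Icc 0 R, |H s + α * s| ≤ K₂ * s ^ 2)
    (hGc : ∀ s ∈ Icc 0 R, |G s - c / k ! * s ^ k| ≤ K₁ * s ^ (k + 1)) :
    ∃ C, ∀ t > 0, |(∫ s in (0 : ℝ)..R, exp (t * H s) * G s) - c / (t * α) ^ (k + 1)| ≤
      C / t ^ (k + 2) := by
  refine ⟨K₁ * (k + 1)! / γ ^ (k + 2) + |c / k !| * K₂ * (k + 2)! / γ ^ (k + 3) +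
    |c / k !| * (k + 1)! / (R * α ^ (k + 2)), fun t ht => ?_⟩
  have hα : 0 < α := hγ.trans_le hγα
  have htα : 0 < t * α := mul_pos ht hα
  have hm := integrableOn_Ioi_pow_mul_exp_neg_mul htα k
  have he : ContinuousOn (fun s => exp (t * H s)) (uIcc 0 R) := by
    rw [uIcc_of_le hR.le]; fun_prop
  have hGR : ContinuousOn G (uIcc 0 R) := by rwa [uIcc_of_le hR.le]
  have hmodel : c / (t * α) ^ (k + 1) =
      c / k ! * (∫ s in (0 : ℝ)..R, s ^ k * exp (-(t * α * s))) +
        c / k ! * ∫ s in Ioi R, s ^ k * exp (-(t * α * s)) := by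
    rw [← mul_add, ← intervalIntegral.integral_Ioi_sub_Ioi hm hR.le, sub_add_cancel,
      integral_Ioi_pow_mul_exp_neg_mul htα k]
    field_simp
  have hnear : ∫ s in (0 : ℝ)..R, exp (t * H s) * G s =
      (∫ s in (0 : ℝ)..R, exp (t * H s) * (G s - c / k ! * s ^ k)) +
      (∫ s in (0 : ℝ)..R, c / k ! * ((exp (t * H s) - exp (-(t * α * s))) * s ^ k)) +
      c / k ! * ∫ s in (0 : ℝ)..R, s ^ k * exp (-(t * α * s)) := by
    rw [← intervalIntegral.integral_const_mul, ← intervalIntegral.integral_add,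
      ← intervalIntegral.integral_add]
    · exact intervalIntegral.integral_congr fun s _ => by ring
    all_goals exact ContinuousOn.intervalIntegrable (by fun_prop)
  have h₁ := abs_intervalIntegral_exp_mul_sub_pow_le hR ht hγ hHγ hGc
  have h₂ :=
    abs_intervalIntegral_mul_exp_sub_exp_le (c := c / k !) (k := k) hR ht hγ hγα hHγ hHα
  have h₃ : |c / k ! * ∫ s in Ioi R, s ^ k * exp (-(t * α * s))| ≤
      |c / k !| * ((k + 1)! / (R * (t * α) ^ (k + 2))) := by
    rw [abs_mul, abs_of_nonneg (setIntegral_nonneg measurableSet_Ioi fun s hs =>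
      mul_nonneg (pow_nonneg (hR.trans hs).le k) (exp_pos _).le)]
    exact mul_le_mul_of_nonneg_left (integral_Ioi_pow_mul_exp_neg_mul_le htα hR k) (abs_nonneg _)
  rw [hnear, hmodel, show ∀ x y z v : ℝ, x + y + z - (z + v) = x + y - v by intros; ring]
  refine (abs_sub _ _).trans ((add_le_add (abs_add_le _ _) le_rfl).trans ?_)
  refine (add_le_add (add_le_add h₁ h₂) h₃).trans (le_of_eq ?_)
  field_simp
  ring

end Watson

lemma intervalIntegral_exp_mul_eq_exp_mul_integral_comp_const_sub (h g : ℝ → ℝ)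
    (a b t : ℝ) :
    ∫ x in a..b, exp (t * h x) * g x =
      exp (t * h b) * ∫ s in (0 : ℝ)..b - a, exp (t * (h (b - s) - h b)) * g (b - s) := by
  rw [← intervalIntegral.integral_const_mul, intervalIntegral.integral_comp_sub_left
    (fun x => exp (t * h b) * (exp (t * (h x - h b)) * g x)), sub_sub_cancel, sub_zero]
  refine intervalIntegral.integral_congr fun x _ => ?_
  rw [← mul_assoc, ← exp_add, mul_sub, add_sub_cancel]

theorem laplace_right_endpoint_noncritical_general
    (a b : ℝ) (hab : a < b)
    (h g : ℝ → ℝ) (k : ℕ)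
    (hh : ContDiffOn ℝ 3 h (Set.Icc a b))
    (hmax : ∀ x ∈ Set.Icc a b, x ≠ b → h x < h b)
    (hh1 : derivWithin h (Set.Icc a b) b ≠ 0)
    (hg : ContDiffOn ℝ (k + 1) g (Set.Icc a b))
    (hgvanish : ∀ i < k, iteratedDerivWithin i g (Set.Icc a b) b = 0) :
    ∃ C > 0, ∃ T > 0, ∀ t > T,
      |(∫ x in a..b, Real.exp (t * h x) * g x) -
        Real.exp (t * h b) * t ^ (-(1 : ℝ) - (k : ℝ)) *
          iteratedDerivWithin k g (Set.Icc a b) b *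
          (derivWithin h (Set.Icc a b) b) ^ (-1 - (k : ℤ)) * (-1 : ℝ) ^ k| ≤
        C * Real.exp (t * h b) * t ^ (-(2 : ℝ) - (k : ℝ)) := by
  set α := derivWithin h (Icc a b) b
  set gₖ := iteratedDerivWithin k g (Icc a b) b
  have hmaps : MapsTo (fun s => b - s) (Icc 0 (b - a)) (Icc a b) := fun s hs =>
    ⟨by linarith [hs.2], by linarith [hs.1]⟩
  have hbmax : IsMaxOn h (Icc a b) b := isMaxOn_iff.2 fun x hx =>
    (eq_or_ne x b).elim (fun hxb => hxb ▸ le_rfl) fun hxb => (hmax x hx hxb).le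
  have hα : 0 < α := (derivWithin_nonneg_of_isMaxOn_right hab
    (hh.differentiableOn (by norm_num) b ⟨hab.le, le_rfl⟩) hbmax).lt_of_ne' hh1
  obtain ⟨K₂, hK₂⟩ := exists_abs_comp_const_sub_sub_add_le hab.le (hh.of_le (by norm_num))
  obtain ⟨K₁, hK₁⟩ := exists_abs_comp_const_sub_sub_le hab.le hg hgvanish
  have hH : ContinuousOn (fun s => h (b - s) - h b) (Icc 0 (b - a)) :=
    (hh.continuousOn.comp (by fun_prop) hmaps).sub continuousOn_const
  obtain ⟨γ, hγ, hγα, hHγ⟩ := exists_le_neg_mul_of_abs_add_mul_le hH (fun s hs =>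
    sub_neg.2 (hmax _ (hmaps (Ioc_subset_Icc_self hs)) (by linarith [hs.1]))) hα hK₂
  obtain ⟨C, hC⟩ := exists_abs_intervalIntegral_exp_mul_sub_le_div_pow (sub_pos.2 hab) hγ hγα
    hH (hg.continuousOn.comp (by fun_prop) hmaps) hHγ hK₂ hK₁
  refine ⟨max C 1, by positivity, 1, one_pos, fun t ht => ?_⟩
  have ht0 : 0 < t := one_pos.trans ht
  have hmodel : exp (t * h b) * t ^ (-(1 : ℝ) - k) * gₖ * α ^ (-1 - (k : ℤ)) * (-1) ^ k =
      exp (t * h b) * ((-1) ^ k * gₖ / (t * α) ^ (k + 1)) := by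
    rw [show -(1 : ℝ) - k = -((k + 1 : ℕ) : ℝ) by push_cast; ring, rpow_neg ht0.le,
      rpow_natCast, show -1 - (k : ℤ) = -((k + 1 : ℕ) : ℤ) by push_cast; ring, zpow_neg,
      zpow_natCast, mul_pow]
    ring
  have hrate : t ^ (-(2 : ℝ) - k) = 1 / t ^ (k + 2) := by
    rw [show -(2 : ℝ) - k = -((k + 2 : ℕ) : ℝ) by push_cast; ring, rpow_neg ht0.le,
      rpow_natCast, one_div]
  rw [intervalIntegral_exp_mul_eq_exp_mul_integral_comp_const_sub, hmodel, ← mul_sub, abs_mul,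
    abs_of_pos (exp_pos _), hrate]
  calc exp (t * h b) * |_| ≤ exp (t * h b) * (C / t ^ (k + 2)) := by gcongr; exact hC t ht0
    _ ≤ exp (t * h b) * (max C 1 / t ^ (k + 2)) := by gcongr; exact le_max_left C 1
    _ = max C 1 * exp (t * h b) * (1 / t ^ (k + 2)) := by ring

/-- Laplace's method, maximum at the right endpoint `b` with `h'(b) ≠ 0`:
`∫ e^{th} g = e^{th(b)} (t^(-1-k) g^(k)(b) (h'(b))^(-1-k) (-1)^k + O(t^(-2-k)))`. -/
theorem laplace_right_endpoint_noncritical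
    (a b : ℝ) (hab : a < b)
    (h g : ℝ → ℝ) (k : ℕ)
    (hh : ContDiffOn ℝ 3 h (Set.Icc a b))
    (hmax : ∀ x ∈ Set.Icc a b, x ≠ b → h x < h b)
    (hh1 : derivWithin h (Set.Icc a b) b ≠ 0)
    (hh2 : iteratedDerivWithin 2 h (Set.Icc a b) b ≠ 0)
    (hg : ContDiffOn ℝ (k + 1) g (Set.Icc a b))
    (hgvanish : ∀ i < k, iteratedDerivWithin i g (Set.Icc a b) b = 0)
    (hgk : iteratedDerivWithin k g (Set.Icc a b) b ≠ 0) :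
    ∃ C > 0, ∃ T > 0, ∀ t > T,
      |(∫ x in a..b, Real.exp (t * h x) * g x) -
        Real.exp (t * h b) * t ^ (-(1 : ℝ) - (k : ℝ)) *
          iteratedDerivWithin k g (Set.Icc a b) b *
          (derivWithin h (Set.Icc a b) b) ^ (-1 - (k : ℤ)) * (-1 : ℝ) ^ k| ≤
        C * Real.exp (t * h b) * t ^ (-(2 : ℝ) - (k : ℝ)) :=
  laplace_right_endpoint_noncritical_general a b hab h g k hh hmax hh1 hg hgvanish
end

section
/- Let $a<b$, let $h:[a,b]\to\mathbb{R}$ be three times continuously differentiable, attaining its maximum over $[a,b]$ only at a point $c$ with $a<c<b$ and satisfying $h''(c)\neq 0$, and let $g:[a,b]\to\mathbb{R}$ be continuously differentiable with $g(c)\neq 0$. Then $\int_a^b e^{t h(x)} g(x)\,dx \sim \sqrt{\tfrac{2\pi}{|h''(c)|}}\, g(c)\, \tfrac{e^{t h(c)}}{\sqrt{t}}$ as $t\to\infty$, i.e., the quotient of $\int_a^b e^{t h(x)} g(x)\,dx$ by $\sqrt{2\pi/|h''(c)|}\, g(c)\, e^{t h(c)} t^{-1/2}$ tends to $1$ as $t\to\infty$.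 -/
open Real MeasureTheory Set Filter
open Topology

/-! Write `h x = h c + q x * (x - c) ^ 2`, where `q` is continuous and negative on `[a, b]`
(Taylor's theorem at `c` gives `q c = h''(c) / 2`; away from `c` negativity is the strict
maximum). The substitution `x = c + u / √t` turns `√t e^{-t h(c)} ∫ e^{t h} g` into
`∫ e^{q(c + u / √t) u²} g(c + u / √t) du` over an interval exhausting `ℝ`. The integrand is
dominated by `M e^{(max q) u²}`, so dominated convergence yields the Gaussian integral
`g(c) √(π / -q c) = g(c) √(2π / |h''(c)|)`. -/

theorem tendsto_sub_div_sq_iteratedDerivWithin_two {f : ℝ → ℝ} {s : Set ℝ} {x₀ : ℝ}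
    (hs : Convex ℝ s) (hx₀ : s ∈ 𝓝 x₀) (hf : ContDiffOn ℝ 2 f s)
    (hf' : derivWithin f s x₀ = 0) :
    Tendsto (fun x => (f x - f x₀) / (x - x₀) ^ 2) (𝓝[≠] x₀)
      (𝓝 (iteratedDerivWithin 2 f s x₀ / 2)) := by
  have hTaylor := (taylor_isLittleO hs (mem_of_mem_nhds hx₀) hf).mono
    (l := 𝓝[≠] x₀) (nhdsWithin_le_nhds.trans (nhdsWithin_eq_nhds.2 hx₀).ge)
  have hlim := hTaylor.tendsto_div_nhds_zero.add_const (iteratedDerivWithin 2 f s x₀ / 2)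
  rw [zero_add] at hlim
  refine hlim.congr' (eventually_nhdsWithin_of_forall fun x (hx : x ≠ x₀) => ?_)
  have hx' : (x - x₀) ^ 2 ≠ 0 := pow_ne_zero 2 (sub_ne_zero.2 hx)
  simp only [taylor_within_apply, Finset.sum_range_succ, Finset.sum_range_zero,
    iteratedDerivWithin_zero, iteratedDerivWithin_one, hf', smul_eq_mul]
  field_simp
  norm_num
  ring

theorem exists_eq_add_mul_sq_of_tendsto_div_sq {h : ℝ → ℝ} {s : Set ℝ} {c L : ℝ}
    (hc : c ∈ s) (hh : ContinuousOn h s) (hmax : ∀ x ∈ s, x ≠ c → h x < h c)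
    (hlim : Tendsto (fun x => (h x - h c) / (x - c) ^ 2) (𝓝[≠] c) (𝓝 L)) (hL : L < 0) :
    ∃ q : ℝ → ℝ, ContinuousOn q s ∧ (∀ x ∈ s, q x < 0) ∧ q c = L ∧
      ∀ x, h x = h c + q x * (x - c) ^ 2 := by
  refine ⟨Function.update (fun x => (h x - h c) / (x - c) ^ 2) c L, fun x hx => ?_,
    fun x hx => ?_, Function.update_self .., fun x => ?_⟩
  · rcases eq_or_ne x c with rfl | hxc
    · exact continuousWithinAt_update_same.2
        (hlim.mono_left (nhdsWithin_mono _ (sdiff_subset_compl _ _)))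
    · rw [continuousWithinAt_update_of_ne hxc]
      exact ((hh x hx).sub continuousWithinAt_const).div (by fun_prop)
        (pow_ne_zero 2 (sub_ne_zero.2 hxc))
  · rcases eq_or_ne x c with rfl | hxc
    · simpa using hL
    · rw [Function.update_of_ne hxc]
      exact div_neg_of_neg_of_pos (sub_neg.2 (hmax x hx hxc))
        (pow_two_pos_of_ne_zero (sub_ne_zero.2 hxc))
  · rcases eq_or_ne x c with rfl | hxc
    · simp
    · rw [Function.update_of_ne hxc, div_mul_cancel₀ _ (pow_ne_zero 2 (sub_ne_zero.2 hxc))]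
      ring

theorem intervalIntegral_tendsto_integral_of_dominated {E ι : Type*} [NormedAddCommGroup E]
    [NormedSpace ℝ E] {l : Filter ι} [l.IsCountablyGenerated] {F : ι → ℝ → E}
    {f : ℝ → E} {lo hi : ι → ℝ} (bound : ℝ → ℝ) (hlo : Tendsto lo l atBot)
    (hhi : Tendsto hi l atTop)
    (hF_meas : ∀ᶠ i in l, AEStronglyMeasurable (F i) (volume.restrict (Ioc (lo i) (hi i))))
    (h_bound : ∀ᶠ i in l, ∀ u ∈ Ioc (lo i) (hi i), ‖F i u‖ ≤ bound u)
    (bound_integrable : Integrable bound)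
    (h_lim : ∀ u, Tendsto (fun i => F i u) l (𝓝 (f u))) :
    Tendsto (fun i => ∫ u in lo i..hi i, F i u) l (𝓝 (∫ u, f u)) := by
  have hind :
      Tendsto (fun i => ∫ u, (Ioc (lo i) (hi i)).indicator (F i) u) l (𝓝 (∫ u, f u)) := by
    refine tendsto_integral_filter_of_dominated_convergence (fun u => ‖bound u‖) ?_ ?_
      bound_integrable.norm (Eventually.of_forall fun u => ?_)
    · filter_upwards [hF_meas] with i hiF
      exact (aestronglyMeasurable_indicator_iff measurableSet_Ioc).2 hiF
    · filter_upwards [h_bound] with i hbound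
      refine Eventually.of_forall fun u => ?_
      by_cases hu : u ∈ Ioc (lo i) (hi i)
      · rw [indicator_of_mem hu]
        exact (hbound u hu).trans (le_abs_self _)
      · rw [indicator_of_notMem hu, norm_zero]
        exact norm_nonneg _
    · refine (h_lim u).congr' ?_
      filter_upwards [hlo.eventually (eventually_lt_atBot u),
        hhi.eventually (eventually_ge_atTop u)] with i h1 h2
      exact (indicator_of_mem (show u ∈ Ioc (lo i) (hi i) from ⟨h1, h2⟩) _).symm
  refine hind.congr' ?_
  filter_upwards [hlo.eventually (eventually_le_atBot 0), hhi.eventually (eventually_ge_atTop 0)]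
    with i h1 h2
  rw [intervalIntegral.integral_of_le (h1.trans h2), integral_indicator measurableSet_Ioc]

theorem tendsto_sqrt_mul_integral_exp_mul_sq {q g : ℝ → ℝ} {a b c : ℝ} (hac : a < c)
    (hcb : c < b) (hq : ContinuousOn q (Icc a b)) (hq_neg : ∀ x ∈ Icc a b, q x < 0)
    (hg : ContinuousOn g (Icc a b)) :
    Tendsto (fun t => √t * ∫ x in a..b, exp (t * (q x * (x - c) ^ 2)) * g x) atTop
      (𝓝 (√(π / -q c) * g c)) := by
  obtain ⟨x₀, hx₀, hq_le⟩ :=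
    isCompact_Icc.exists_isMaxOn (nonempty_Icc.2 (hac.trans hcb).le) hq
  obtain ⟨M, hM⟩ := isCompact_Icc.exists_bound_of_continuousOn hg
  set F : ℝ → ℝ → ℝ := fun t u => exp (q (u / √t + c) * u ^ 2) * g (u / √t + c)
  have hmem :
      ∀ t > 0, ∀ u ∈ Icc (√t * (a - c)) (√t * (b - c)), u / √t + c ∈ Icc a b := by
    intro t ht u hu
    have hst : 0 < √t := sqrt_pos.2 ht
    have hlo : a - c ≤ u / √t := (le_div_iff₀ hst).2 (by linarith [hu.1])
    have hhi : u / √t ≤ b - c := (div_le_iff₀ hst).2 (by linarith [hu.2])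
    exact ⟨by linarith, by linarith⟩
  have hsubst : ∀ t > 0, √t * ∫ x in a..b, exp (t * (q x * (x - c) ^ 2)) * g x =
      ∫ u in √t * (a - c)..√t * (b - c), F t u := by
    intro t ht
    have hst : 0 < √t := sqrt_pos.2 ht
    have hF : ∀ u, F t u = (fun x => exp (t * (q x * (x - c) ^ 2)) * g x) (u / √t + c) := by
      intro u
      simp only [F, add_sub_cancel_right, div_pow, sq_sqrt ht.le]
      field_simp
    rw [intervalIntegral.integral_congr fun u _ => hF u,
      intervalIntegral.integral_comp_div_add (fun x => exp (t * (q x * (x - c) ^ 2)) * g x)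
        hst.ne', smul_eq_mul, mul_div_cancel_left₀ _ hst.ne', mul_div_cancel_left₀ _ hst.ne',
      sub_add_cancel, sub_add_cancel]
  have hgauss : ∫ u, exp (q c * u ^ 2) * g c = √(π / -q c) * g c := by
    rw [integral_mul_const, ← integral_gaussian, neg_neg]
  rw [← hgauss]
  have hc : Icc a b ∈ 𝓝 c := Icc_mem_nhds hac hcb
  refine (intervalIntegral_tendsto_integral_of_dominated (F := F) (lo := fun t => √t * (a - c))
    (hi := fun t => √t * (b - c)) (fun u => M * exp (q x₀ * u ^ 2)) ?_ ?_ ?_ ?_ ?_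
    fun u => ?_).congr' ?_
  · exact tendsto_sqrt_atTop.atTop_mul_const_of_neg (by linarith)
  · exact tendsto_sqrt_atTop.atTop_mul_const (by linarith)
  · filter_upwards [eventually_gt_atTop 0] with t ht
    have hcont : ContinuousOn (F t) (Icc (√t * (a - c)) (√t * (b - c))) :=
      (((hq.comp (by fun_prop) (hmem t ht)).mul (continuousOn_pow 2)).rexp).mul
        (hg.comp (by fun_prop) (hmem t ht))
    exact (hcont.mono Ioc_subset_Icc_self).aestronglyMeasurable measurableSet_Ioc
  · filter_upwards [eventually_gt_atTop 0] with t ht u hu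
    have hx := hmem t ht u (Ioc_subset_Icc_self hu)
    rw [norm_mul, norm_of_nonneg (exp_nonneg _), mul_comm]
    exact mul_le_mul (hM _ hx)
      (exp_le_exp.2 (mul_le_mul_of_nonneg_right (hq_le hx) (sq_nonneg u)))
      (exp_nonneg _) ((norm_nonneg _).trans (hM _ hx))
  · simpa using (integrable_exp_neg_mul_sq (neg_pos.2 (hq_neg x₀ hx₀))).const_mul M
  · have hx : Tendsto (fun t => u / √t + c) atTop (𝓝 c) := by
      simpa using (tendsto_const_nhds.div_atTop tendsto_sqrt_atTop).add_const c
    exact ((((hq.continuousAt hc).tendsto.comp hx).mul_const (u ^ 2)).rexp).mul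
      ((hg.continuousAt hc).tendsto.comp hx)
  · filter_upwards [eventually_gt_atTop 0] with t ht
    exact (hsubst t ht).symm

theorem laplace_interior_classical_general
    (a b c : ℝ) (hac : a < c) (hcb : c < b)
    (h g : ℝ → ℝ)
    (hh : ContDiffOn ℝ 3 h (Set.Icc a b))
    (hmax : ∀ x ∈ Set.Icc a b, x ≠ c → h x < h c)
    (hh2 : iteratedDerivWithin 2 h (Set.Icc a b) c ≠ 0)
    (hg : ContDiffOn ℝ 1 g (Set.Icc a b))
    (hgc : g c ≠ 0) :
    Filter.Tendsto
      (fun t : ℝ => (∫ x in a..b, Real.exp (t * h x) * g x) /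
        (Real.sqrt (2 * π / |iteratedDerivWithin 2 h (Set.Icc a b) c|) * g c *
          (Real.exp (t * h c) / Real.sqrt t)))
      Filter.atTop (nhds 1) := by
  have hc : Icc a b ∈ 𝓝 c := Icc_mem_nhds hac hcb
  have hlocal : IsLocalMax h c := by
    filter_upwards [hc] with x hx
    rcases eq_or_ne x c with rfl | hxc
    exacts [le_rfl, (hmax x hx hxc).le]
  have hlim := tendsto_sub_div_sq_iteratedDerivWithin_two (convex_Icc a b) hc
    (hh.of_le (by norm_num)) (by rw [derivWithin_of_mem_nhds hc, hlocal.deriv_eq_zero])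
  set D := iteratedDerivWithin 2 h (Icc a b) c
  have hD : D < 0 := by
    refine lt_of_le_of_ne ?_ hh2
    have := le_of_tendsto hlim <| (hlocal.filter_mono nhdsWithin_le_nhds).mono fun x hx =>
      div_nonpos_of_nonpos_of_nonneg (sub_nonpos.2 hx) (sq_nonneg _)
    linarith
  obtain ⟨q, hq, hq_neg, hqc, hfac⟩ := exists_eq_add_mul_sq_of_tendsto_div_sq
    (mem_of_mem_nhds hc) hh.continuousOn hmax hlim (by linarith)
  have hconst : √(π / -q c) = √(2 * π / |D|) := by
    rw [hqc, abs_of_neg hD]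
    ring_nf
  have hfactor : ∀ t, ∫ x in a..b, exp (t * h x) * g x =
      exp (t * h c) * ∫ x in a..b, exp (t * (q x * (x - c) ^ 2)) * g x := by
    intro t
    rw [← intervalIntegral.integral_const_mul]
    congr 1 with x
    rw [hfac x, mul_add, exp_add, mul_assoc]
  have hlaplace := (tendsto_sqrt_mul_integral_exp_mul_sq hac hcb hq hq_neg
    hg.continuousOn).div_const (√(2 * π / |D|) * g c)
  rw [hconst, div_self (mul_ne_zero (sqrt_pos.2 (by positivity)).ne' hgc)] at hlaplace
  refine hlaplace.congr' ?_
  filter_upwards [eventually_gt_atTop 0] with t ht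
  rw [hfactor]
  field_simp

/-- Classical Laplace's method, interior maximum:
`∫ e^{th} g ∼ √(2π/|h''(c)|) g(c) e^{th(c)} / √t` as `t → ∞`. -/
theorem laplace_interior_classical
    (a b c : ℝ) (hab : a < b) (hac : a < c) (hcb : c < b)
    (h g : ℝ → ℝ)
    (hh : ContDiffOn ℝ 3 h (Set.Icc a b))
    (hmax : ∀ x ∈ Set.Icc a b, x ≠ c → h x < h c)
    (hh2 : iteratedDerivWithin 2 h (Set.Icc a b) c ≠ 0)
    (hg : ContDiffOn ℝ 1 g (Set.Icc a b))
    (hgc : g c ≠ 0) :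
    Filter.Tendsto
      (fun t : ℝ => (∫ x in a..b, Real.exp (t * h x) * g x) /
        (Real.sqrt (2 * π / |iteratedDerivWithin 2 h (Set.Icc a b) c|) * g c *
          (Real.exp (t * h c) / Real.sqrt t)))
      Filter.atTop (nhds 1) :=
  laplace_interior_classical_general a b c hac hcb h g hh hmax hh2 hg hgc
end

section
/- Let $a<b$, let $h:[a,b]\to\mathbb{R}$ be three times continuously differentiable, attaining its maximum over $[a,b]$ only at an endpoint $c\in\{a,b\}$, with $h'(c)\neq 0$ and $h''(c)\neq 0$, and let $g:[a,b]\to\mathbb{R}$ be continuously differentiable with $g(c)\neq 0$. Then $\int_a^b e^{t h(x)} g(x)\,dx \sim \tfrac{g(c)}{|h'(c)|}\, \tfrac{e^{t h(c)}}{t}$ as $t\to\infty$. -/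
/-!
Substituting `x = c ± s / t` turns `t ∫ e^{t (h x - h c)} g x dx` into an integral over
`s ∈ (0, t (b - a)]` whose integrand tends to `e^{-|h'(c)| s} g c`. Because `c` is the strict
maximum and `h'(c) ≠ 0`, there is `k > 0` with `h c - h x ≥ k |x - c|` on `[a, b]`, so
`e^{-k s} sup |g|` dominates the integrands and dominated convergence yields `g c / |h'(c)|`.
The right endpoint reduces to the left one by the reflection `x ↦ a + b - x`.
-/

open Real MeasureTheory Set Filter Topology

section
variable {h : ℝ → ℝ} {h' a b : ℝ}

theorem HasDerivWithinAt.nonpos_of_isMaxOn_Icc_left (hab : a < b)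
    (hmax : IsMaxOn h (Icc a b) a) (hd : HasDerivWithinAt h h' (Icc a b) a) : h' ≤ 0 := by
  have hcone : b - a ∈ posTangentConeAt (Icc a b) a :=
    sub_mem_posTangentConeAt_of_segment_subset (segment_subset_Icc hab.le)
  have := hmax.localize.hasFDerivWithinAt_nonpos hd.hasFDerivWithinAt hcone
  simp only [ContinuousLinearMap.toSpanSingleton_apply, smul_eq_mul] at this
  nlinarith

theorem exists_pos_mul_sub_le_of_hasDerivWithinAt_left (hab : a ≤ b)
    (hh : ContinuousOn h (Icc a b)) (hmax : ∀ x ∈ Icc a b, x ≠ a → h x < h a)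
    (hd : HasDerivWithinAt h h' (Icc a b) a) (hh' : h' < 0) :
    ∃ k > 0, ∀ x ∈ Icc a b, k * (x - a) ≤ h a - h x := by
  classical
  -- the slope at `a`, completed by `h'` at `a`, is continuous and negative on `[a, b]`
  set φ := Function.update (slope h a) a h'
  have hφ_of_ne : ∀ x ≠ a, φ x = (h x - h a) / (x - a) := fun x hx => by
    simp [φ, hx, slope_def_field]
  have hφ : ContinuousOn φ (Icc a b) := by
    intro x hx
    rcases eq_or_ne x a with rfl | hxa
    · exact continuousWithinAt_update_same.2 (hasDerivWithinAt_iff_tendsto_slope.1 hd)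
    · refine (((hh x hx).sub continuousWithinAt_const).div
        (continuousWithinAt_id.sub continuousWithinAt_const)
        (sub_ne_zero.2 hxa)).congr_of_eventuallyEq ?_ (hφ_of_ne x hxa)
      filter_upwards [nhdsWithin_le_nhds (isOpen_ne.mem_nhds hxa)] with y hy using hφ_of_ne y hy
  have hφ_neg : ∀ x ∈ Icc a b, φ x < 0 := by
    intro x hx
    rcases eq_or_ne x a with rfl | hxa
    · simpa [φ] using hh'
    · rw [hφ_of_ne x hxa]
      exact div_neg_of_neg_of_pos (sub_neg.2 (hmax x hx hxa)) (sub_pos.2 (hx.1.lt_of_ne' hxa))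
  obtain ⟨x₀, hx₀, hx₀max⟩ := isCompact_Icc.exists_isMaxOn (nonempty_Icc.2 hab) hφ
  refine ⟨-φ x₀, neg_pos.2 (hφ_neg x₀ hx₀), fun x hx => ?_⟩
  rcases eq_or_ne x a with rfl | hxa
  · simp
  have hxa' : 0 < x - a := sub_pos.2 (hx.1.lt_of_ne' hxa)
  have hle : φ x ≤ φ x₀ := hx₀max hx
  rw [hφ_of_ne x hxa, div_le_iff₀ hxa'] at hle
  linarith

theorem HasDerivWithinAt.tendsto_mul_sub_add_div {S : Set ℝ} (hd : HasDerivWithinAt h h' S a)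
    {s : ℝ} (hs : s ≠ 0) (hu : Tendsto (fun t => a + s / t) atTop (𝓝[S \ {a}] a)) :
    Tendsto (fun t => t * (h (a + s / t) - h a)) atTop (𝓝 (h' * s)) := by
  refine (((hasDerivWithinAt_iff_tendsto_slope.1 hd).comp hu).mul_const s).congr' ?_
  filter_upwards [eventually_ne_atTop 0] with t ht
  simp only [Function.comp_apply, slope_def_field, add_sub_cancel_left]
  field_simp

theorem tendsto_add_div_atTop_nhdsWithin_Ioc (hab : a < b) {s : ℝ} (hs : 0 < s) :
    Tendsto (fun t => a + s / t) atTop (𝓝[Ioc a b] a) := by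
  refine tendsto_nhdsWithin_iff.2 ⟨?_, ?_⟩
  · have : Tendsto (fun t : ℝ => s / t) atTop (𝓝 0) := tendsto_const_nhds.div_atTop tendsto_id
    simpa using this.const_add a
  filter_upwards [eventually_gt_atTop 0, eventually_ge_atTop (s / (b - a))] with t ht hts
  refine ⟨by simp only [lt_add_iff_pos_right]; positivity, ?_⟩
  rw [div_le_iff₀ (sub_pos.2 hab)] at hts
  have : s / t ≤ b - a := by rw [div_le_iff₀ ht]; linarith
  linarith

theorem mul_intervalIntegral_eq_integral_indicator (f : ℝ → ℝ) (hab : a ≤ b) {t : ℝ}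
    (ht : 0 < t) :
    t * ∫ x in a..b, f x = ∫ s, (Ioc 0 (t * (b - a))).indicator (fun s => f (a + s / t)) s := by
  rw [integral_indicator measurableSet_Ioc, ← intervalIntegral.integral_of_le
    (mul_nonneg ht.le (sub_nonneg.2 hab)), intervalIntegral.integral_comp_add_div _ ht.ne']
  field_simp
  simp [ht.ne']

theorem add_div_mem_Icc_of_mem_Ioc {t s : ℝ} (ht : 0 < t) (hs : s ∈ Ioc 0 (t * (b - a))) :
    a + s / t ∈ Icc a b := by
  have : s / t ≤ b - a := by rw [div_le_iff₀ ht]; linarith [hs.2]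
  exact ⟨by simp only [le_add_iff_nonneg_right]; exact div_nonneg hs.1.le ht.le, by linarith⟩

variable {g : ℝ → ℝ}

noncomputable def laplaceRescaled (h g : ℝ → ℝ) (a b t : ℝ) : ℝ → ℝ :=
  (Ioc 0 (t * (b - a))).indicator fun s => exp (t * (h (a + s / t) - h a)) * g (a + s / t)

theorem mul_integral_eq_integral_laplaceRescaled (hab : a ≤ b) {t : ℝ} (ht : 0 < t) :
    t * ∫ x in a..b, exp (t * (h x - h a)) * g x = ∫ s, laplaceRescaled h g a b t s :=
  mul_intervalIntegral_eq_integral_indicator _ hab ht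

theorem aestronglyMeasurable_laplaceRescaled (hh : ContinuousOn h (Icc a b))
    (hg : ContinuousOn g (Icc a b)) {t : ℝ} (ht : 0 < t) :
    AEStronglyMeasurable (laplaceRescaled h g a b t) := by
  have hf : ContinuousOn (fun x => exp (t * (h x - h a)) * g x) (Icc a b) :=
    (continuous_exp.comp_continuousOn ((hh.sub continuousOn_const).const_smul t)).mul hg
  exact (aestronglyMeasurable_indicator_iff measurableSet_Ioc).2 ((hf.comp (by fun_prop)
    fun s hs => add_div_mem_Icc_of_mem_Ioc ht hs).aestronglyMeasurable measurableSet_Ioc)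

theorem norm_laplaceRescaled_le {k C t : ℝ} (hlin : ∀ x ∈ Icc a b, k * (x - a) ≤ h a - h x)
    (hC : ∀ x ∈ Icc a b, ‖g x‖ ≤ C) (hC0 : 0 ≤ C) (ht : 0 < t) (s : ℝ) :
    ‖laplaceRescaled h g a b t s‖ ≤ (Ioi 0).indicator (fun s => exp (-k * s) * C) s := by
  by_cases hs : s ∈ Ioc 0 (t * (b - a))
  · have hx := add_div_mem_Icc_of_mem_Ioc ht hs
    have hexp : t * (h (a + s / t) - h a) ≤ -k * s := by
      have := hlin _ hx
      rw [add_sub_cancel_left, mul_div_assoc', div_le_iff₀ ht] at this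
      linarith
    simp only [laplaceRescaled, indicator_of_mem hs, indicator_of_mem (mem_Ioi.2 hs.1), norm_mul,
      norm_of_nonneg (exp_pos _).le]
    exact mul_le_mul (exp_le_exp.2 hexp) (hC _ hx) (norm_nonneg _) (exp_pos _).le
  · simp only [laplaceRescaled, indicator_of_notMem hs, norm_zero]
    exact indicator_nonneg (fun s _ => mul_nonneg (exp_pos _).le hC0) s

theorem tendsto_laplaceRescaled (hab : a < b) (hg : ContinuousWithinAt g (Icc a b) a)
    (hd : HasDerivWithinAt h h' (Icc a b) a) (s : ℝ) :
    Tendsto (fun t => laplaceRescaled h g a b t s) atTop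
      (𝓝 ((Ioi 0).indicator (fun s => exp (h' * s) * g a) s)) := by
  rcases le_or_gt s 0 with hs | hs
  · simp [laplaceRescaled, hs]
  have hx : Tendsto (fun t => a + s / t) atTop (𝓝[Ioc a b] a) :=
    tendsto_add_div_atTop_nhdsWithin_Ioc hab hs
  have hexp := hd.tendsto_mul_sub_add_div hs.ne' (by rwa [Icc_sdiff_left])
  have hgx := (hg.mono Ioc_subset_Icc_self).tendsto.comp hx
  rw [indicator_of_mem (show s ∈ Ioi 0 from hs)]
  refine ((continuous_exp.tendsto _).comp hexp |>.mul hgx).congr' ?_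
  filter_upwards [eventually_ge_atTop (s / (b - a))] with t ht
  rw [div_le_iff₀ (sub_pos.2 hab)] at ht
  simp [laplaceRescaled, indicator_of_mem (show s ∈ Ioc 0 (t * (b - a)) from ⟨hs, ht⟩)]

theorem tendsto_mul_integral_exp_mul_sub_left (hab : a < b) (hh : ContinuousOn h (Icc a b))
    (hg : ContinuousOn g (Icc a b)) (hmax : ∀ x ∈ Icc a b, x ≠ a → h x < h a)
    (hd : HasDerivWithinAt h h' (Icc a b) a) (hh' : h' ≠ 0) :
    Tendsto (fun t => t * ∫ x in a..b, exp (t * (h x - h a)) * g x) atTop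
      (𝓝 (g a / |h'|)) := by
  have ha : a ∈ Icc a b := left_mem_Icc.2 hab.le
  have hamax : IsMaxOn h (Icc a b) a := isMaxOn_iff.2 fun x hx => by
    rcases eq_or_ne x a with rfl | hxa
    exacts [le_rfl, (hmax x hx hxa).le]
  have hneg : h' < 0 := (hd.nonpos_of_isMaxOn_Icc_left hab hamax).lt_of_ne hh'
  obtain ⟨k, hk, hlin⟩ := exists_pos_mul_sub_le_of_hasDerivWithinAt_left hab.le hh hmax hd hneg
  obtain ⟨C, hC⟩ := isCompact_Icc.exists_bound_of_continuousOn hg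
  have hlim : ∫ s, (Ioi 0).indicator (fun s => exp (h' * s) * g a) s = g a / |h'| := by
    rw [integral_indicator measurableSet_Ioi, integral_mul_const, integral_exp_mul_Ioi hneg,
      abs_of_neg hneg]
    simp only [mul_zero, exp_zero]
    field_simp
  rw [← hlim]
  refine (tendsto_integral_filter_of_dominated_convergence
    ((Ioi 0).indicator fun s => exp (-k * s) * C) ?_ ?_ ?_
    (Eventually.of_forall (tendsto_laplaceRescaled hab (hg a ha) hd))).congr' ?_
  · filter_upwards [eventually_gt_atTop 0] with t ht
    exact aestronglyMeasurable_laplaceRescaled hh hg ht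
  · filter_upwards [eventually_gt_atTop 0] with t ht
    exact Eventually.of_forall
      (norm_laplaceRescaled_le hlin hC ((norm_nonneg _).trans (hC a ha)) ht)
  · exact (integrable_indicator_iff measurableSet_Ioi).2
      ((exp_neg_integrableOn_Ioi 0 hk).mul_const C)
  · filter_upwards [eventually_gt_atTop 0] with t ht
    exact (mul_integral_eq_integral_laplaceRescaled hab.le ht).symm

theorem tendsto_mul_integral_exp_mul_sub_right (hab : a < b) (hh : ContinuousOn h (Icc a b))
    (hg : ContinuousOn g (Icc a b)) (hmax : ∀ x ∈ Icc a b, x ≠ b → h x < h b)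
    (hd : HasDerivWithinAt h h' (Icc a b) b) (hh' : h' ≠ 0) :
    Tendsto (fun t => t * ∫ x in a..b, exp (t * (h x - h b)) * g x) atTop
      (𝓝 (g b / |h'|)) := by
  have hρ : MapsTo (fun x => a + b - x) (Icc a b) (Icc a b) := fun x hx =>
    ⟨by linarith [hx.2], by linarith [hx.1]⟩
  have hρd : HasDerivWithinAt (fun x => a + b - x) (-1) (Icc a b) a := by
    simpa using (hasDerivWithinAt_id a (Icc a b)).const_sub (a + b)
  have hreflect := tendsto_mul_integral_exp_mul_sub_left hab (hh.comp (by fun_prop) hρ)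
    (hg.comp (by fun_prop) hρ) (fun x hx hxa => ?_) (hd.comp_of_eq a hρd hρ (by ring))
    (by simpa using hh')
  · simp only [Function.comp_apply, add_sub_cancel_left, mul_neg, mul_one, abs_neg] at hreflect
    refine hreflect.congr fun t => ?_
    congr 1
    simpa using intervalIntegral.integral_comp_sub_left
      (fun x => exp (t * (h x - h b)) * g x) (a + b) (a := a) (b := b)
  · simp only [Function.comp_apply, add_sub_cancel_left]
    exact hmax _ (hρ hx) (by contrapose! hxa; linarith)

end

theorem laplace_endpoint_noncritical_classical_general
    (a b c : ℝ) (hab : a < b) (hc : c = a ∨ c = b)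
    (h g : ℝ → ℝ)
    (hh : ContDiffOn ℝ 3 h (Set.Icc a b))
    (hmax : ∀ x ∈ Set.Icc a b, x ≠ c → h x < h c)
    (hh1 : derivWithin h (Set.Icc a b) c ≠ 0)
    (hg : ContDiffOn ℝ 1 g (Set.Icc a b))
    (hgc : g c ≠ 0) :
    Filter.Tendsto
      (fun t : ℝ => (∫ x in a..b, Real.exp (t * h x) * g x) /
        (g c / |derivWithin h (Set.Icc a b) c| * (Real.exp (t * h c) / t)))
      Filter.atTop (nhds 1) := by
  have hcmem : c ∈ Icc a b := by rcases hc with rfl | rfl <;> simp [hab.le]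
  have hd : HasDerivWithinAt h (derivWithin h (Icc a b) c) (Icc a b) c :=
    (hh.differentiableOn (by norm_num) c hcmem).hasDerivWithinAt
  have hlim : Tendsto (fun t => t * ∫ x in a..b, exp (t * (h x - h c)) * g x) atTop
      (𝓝 (g c / |derivWithin h (Icc a b) c|)) := by
    rcases hc with rfl | rfl
    · exact tendsto_mul_integral_exp_mul_sub_left hab hh.continuousOn hg.continuousOn hmax hd
        hh1
    · exact tendsto_mul_integral_exp_mul_sub_right hab hh.continuousOn hg.continuousOn hmax hd
        hh1
  have hlimit_ne : g c / |derivWithin h (Icc a b) c| ≠ 0 := div_ne_zero hgc (abs_ne_zero.2 hh1)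
  refine (div_self hlimit_ne ▸ hlim.div_const _).congr' ?_
  filter_upwards [eventually_gt_atTop 0] with t ht
  have hfactor : ∫ x in a..b, exp (t * h x) * g x =
      exp (t * h c) * ∫ x in a..b, exp (t * (h x - h c)) * g x := by
    rw [← intervalIntegral.integral_const_mul]
    congr 1 with x
    rw [← mul_assoc, ← exp_add]
    ring_nf
  rw [hfactor]
  field_simp

/-- Classical Laplace's method, endpoint maximum with `h'(c) ≠ 0`:
`∫ e^{th} g ∼ (g(c)/|h'(c)|) e^{th(c)} / t` as `t → ∞`. -/
theorem laplace_endpoint_noncritical_classical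
    (a b c : ℝ) (hab : a < b) (hc : c = a ∨ c = b)
    (h g : ℝ → ℝ)
    (hh : ContDiffOn ℝ 3 h (Set.Icc a b))
    (hmax : ∀ x ∈ Set.Icc a b, x ≠ c → h x < h c)
    (hh1 : derivWithin h (Set.Icc a b) c ≠ 0)
    (hh2 : iteratedDerivWithin 2 h (Set.Icc a b) c ≠ 0)
    (hg : ContDiffOn ℝ 1 g (Set.Icc a b))
    (hgc : g c ≠ 0) :
    Filter.Tendsto
      (fun t : ℝ => (∫ x in a..b, Real.exp (t * h x) * g x) /
        (g c / |derivWithin h (Set.Icc a b) c| * (Real.exp (t * h c) / t)))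
      Filter.atTop (nhds 1) :=
  laplace_endpoint_noncritical_classical_general a b c hab hc h g hh hmax hh1 hg hgc
end
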